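/- Let b = (0,b₂,b₃,b₄) ∈ Q with b₂ ≠ 0 and Tr(b₃) = 0. Then the centralizer of b in Q has exactly 256 elements, i.e. it has index 16 in Q; equivalently, there are exactly 4 pairs (a₁,a₂) ∈ F² satisfying a₁b₂² = b₂a₁⁴ and a₁b₃² + a₂b₂⁴ = b₃a₁ + b₂a₂⁴. -/

import Mathlib

/-!
For `b = (0, b₂, b₃, b₄)` the first two coordinates of `a * b` and `b * a` always agree, and the
last two agree iff `(a₁, a₂)` solves the two equations of the statement; so the centralizer is this
solution set times `F²`. The first equation reads `b₂a₁(b₂ - a₁³) = 0`, and cubing is a bijection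
of `GF(8)` (because `x¹⁵ = x`), so `a₁ ∈ {0, b₂⁵}`. For such `a₁` the identity `b₃⁸ = b₃` turns the
second equation into `d b₂⁴ = b₂ d⁴` for `d = a₂ + a₁³b₃²`, whose solutions are `d ∈ {0, b₂}`.
This gives 4 pairs, hence `4 · 8² = 256` elements.
-/

noncomputable section

/-- `F` is the field `GF(8)` with 8 elements (characteristic 2). -/
abbrev F : Type := GaloisField 2 3

/-- The trace map `Tr : F → F`, `Tr α = α + α² + α⁴`. -/
def Tr (α : F) : F := α + α ^ 2 + α ^ 4

theorem Tr_zero : Tr 0 = 0 := by simp [Tr]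

theorem F.pow8 (x : F) : x ^ 8 = x := by
  haveI : Fintype F := Fintype.ofFinite F
  have h := FiniteField.pow_card x
  rwa [← Nat.card_eq_fintype_card, GaloisField.card 2 3 (by norm_num)] at h

theorem F.add_sq (x y : F) : (x + y) ^ 2 = x ^ 2 + y ^ 2 := CharTwo.add_sq x y

theorem F.add_pow4 (x y : F) : (x + y) ^ 4 = x ^ 4 + y ^ 4 := by
  rw [show (4 : ℕ) = 2 * 2 from rfl, pow_mul, pow_mul, pow_mul, F.add_sq, F.add_sq]

theorem F.two (x : F) : x + x = 0 := CharTwo.add_self_eq_zero x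

/-- The group `Q = 1 + J` of the paper, coded as quadruples of coefficients. -/
structure Q : Type where
  a1 : F
  a2 : F
  a3 : F
  a4 : F

namespace Q

instance : Mul Q :=
  ⟨fun a b =>
    ⟨a.a1 + b.a1, a.a2 + b.a2 + a.a1 * b.a1 ^ 2,
      a.a3 + b.a3 + a.a1 * b.a2 ^ 2 + a.a2 * b.a1 ^ 4,
      a.a4 + b.a4 + a.a1 * b.a3 ^ 2 + a.a2 * b.a2 ^ 4 + a.a3 * b.a1⟩⟩

theorem mul_def (a b : Q) :
    a * b =
      ⟨a.a1 + b.a1, a.a2 + b.a2 + a.a1 * b.a1 ^ 2,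
        a.a3 + b.a3 + a.a1 * b.a2 ^ 2 + a.a2 * b.a1 ^ 4,
        a.a4 + b.a4 + a.a1 * b.a3 ^ 2 + a.a2 * b.a2 ^ 4 + a.a3 * b.a1⟩ :=
  rfl

instance : One Q := ⟨⟨0, 0, 0, 0⟩⟩

theorem one_def : (1 : Q) = ⟨0, 0, 0, 0⟩ := rfl

instance : Inv Q :=
  ⟨fun a =>
    ⟨a.a1, a.a2 + a.a1 ^ 3,
      a.a3 + a.a1 * (a.a2 + a.a1 ^ 3) ^ 2 + a.a2 * a.a1 ^ 4,
      a.a4 + a.a1 * (a.a3 + a.a1 * (a.a2 + a.a1 ^ 3) ^ 2 + a.a2 * a.a1 ^ 4) ^ 2 +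
        a.a2 * (a.a2 + a.a1 ^ 3) ^ 4 + a.a3 * a.a1⟩⟩

theorem inv_def (a : Q) :
    a⁻¹ =
      ⟨a.a1, a.a2 + a.a1 ^ 3,
        a.a3 + a.a1 * (a.a2 + a.a1 ^ 3) ^ 2 + a.a2 * a.a1 ^ 4,
        a.a4 + a.a1 * (a.a3 + a.a1 * (a.a2 + a.a1 ^ 3) ^ 2 + a.a2 * a.a1 ^ 4) ^ 2 +
          a.a2 * (a.a2 + a.a1 ^ 3) ^ 4 + a.a3 * a.a1⟩ :=
  rfl

theorem pr8 (x : F) : x ^ 8 = x := F.pow8 x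
theorem pr9 (x : F) : x ^ 9 = x ^ 2 := by rw [show (9:ℕ) = 1+8 from rfl, pow_add, F.pow8]; ring
theorem pr10 (x : F) : x ^ 10 = x ^ 3 := by rw [show (10:ℕ) = 2+8 from rfl, pow_add, F.pow8]; ring
theorem pr11 (x : F) : x ^ 11 = x ^ 4 := by rw [show (11:ℕ) = 3+8 from rfl, pow_add, F.pow8]; ring
theorem pr12 (x : F) : x ^ 12 = x ^ 5 := by rw [show (12:ℕ) = 4+8 from rfl, pow_add, F.pow8]; ring
theorem pr13 (x : F) : x ^ 13 = x ^ 6 := by rw [show (13:ℕ) = 5+8 from rfl, pow_add, F.pow8]; ring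
theorem pr14 (x : F) : x ^ 14 = x ^ 7 := by rw [show (14:ℕ) = 6+8 from rfl, pow_add, F.pow8]; ring
theorem pr15 (x : F) : x ^ 15 = x := by rw [show (15:ℕ) = 7+8 from rfl, pow_add, F.pow8, ← pow_succ, F.pow8]
theorem pr16 (x : F) : x ^ 16 = x ^ 2 := by rw [show (16:ℕ) = 8+8 from rfl, pow_add, F.pow8]; ring
theorem pr17 (x : F) : x ^ 17 = x ^ 3 := by rw [show (17:ℕ) = 9+8 from rfl, pow_add, F.pow8, pr9]; ring
theorem pr18 (x : F) : x ^ 18 = x ^ 4 := by rw [show (18:ℕ) = 10+8 from rfl, pow_add, F.pow8, pr10]; ring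
theorem pr19 (x : F) : x ^ 19 = x ^ 5 := by rw [show (19:ℕ) = 11+8 from rfl, pow_add, F.pow8, pr11]; ring
theorem pr20 (x : F) : x ^ 20 = x ^ 6 := by rw [show (20:ℕ) = 12+8 from rfl, pow_add, F.pow8, pr12]; ring

theorem mul_assoc' (a b c : Q) : a * b * c = a * (b * c) := by
  obtain ⟨a1, a2, a3, a4⟩ := a
  obtain ⟨b1, b2, b3, b4⟩ := b
  obtain ⟨c1, c2, c3, c4⟩ := c
  simp only [mul_def, mk.injEq]
  refine ⟨by ring, ?_, ?_, ?_⟩ <;>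
  · simp only [F.add_sq, F.add_pow4, mul_pow]
    ring_nf
    try simp only [pr8, pr9, pr10, pr11, pr12, pr13, pr14, pr15, pr16, pr17, pr18, pr19, pr20]
    try ring_nf

theorem one_mul' (a : Q) : 1 * a = a := by
  obtain ⟨a1, a2, a3, a4⟩ := a
  simp only [one_def, mul_def, mk.injEq]
  refine ⟨by ring, by ring, by ring, by ring⟩

theorem mul_one' (a : Q) : a * 1 = a := by
  obtain ⟨a1, a2, a3, a4⟩ := a
  simp only [one_def, mul_def, mk.injEq]
  refine ⟨by ring, by ring, by ring, by ring⟩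

theorem inv_mul_cancel' (a : Q) : a⁻¹ * a = 1 := by
  obtain ⟨a1, a2, a3, a4⟩ := a
  show Q.mk _ _ _ _ * _ = _
  simp only [one_def, mul_def, mk.injEq]
  refine ⟨?_, ?_, ?_, ?_⟩ <;>
  · try simp only [F.add_sq, F.add_pow4, mul_pow]
    try ring_nf
    try simp only [pr8, pr9, pr10, pr11, pr12, pr13, pr14, pr15, pr16, pr17, pr18, pr19, pr20]
    try ring_nf
    try simp [CharTwo.two_eq_zero]
    try ring_nf
    try simp [CharTwo.two_eq_zero]

instance : Group Q where
  mul_assoc := mul_assoc'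
  one_mul := one_mul'
  mul_one := mul_one'
  inv_mul_cancel := inv_mul_cancel'

end Q

theorem pow_injective_of_pow_mul_eq_self {M : Type*} [Monoid M] {m k : ℕ}
    (h : ∀ x : M, x ^ (m * k) = x) : Function.Injective (fun x : M => x ^ m) := by
  intro x y hxy
  calc x = (x ^ m) ^ k := by rw [← pow_mul, h]
    _ = (y ^ m) ^ k := congrArg (· ^ k) hxy
    _ = y := by rw [← pow_mul, h]

theorem mul_pow_four_eq_iff {R : Type*} [CommRing R] [IsDomain R] {b c d : R} (hb : b ≠ 0) :
    b * d ^ 4 = b * c * d ↔ d = 0 ∨ d ^ 3 = c := by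
  rw [← sub_eq_zero, show b * d ^ 4 - b * c * d = b * d * (d ^ 3 - c) by ring, mul_eq_zero,
    mul_eq_zero, sub_eq_zero]
  simp [hb]

theorem F.card : Nat.card F = 8 := GaloisField.card 2 3 (by norm_num)

theorem F.pow_three_injective : Function.Injective (fun x : F => x ^ 3) :=
  pow_injective_of_pow_mul_eq_self (k := 5) Q.pr15

theorem F.mul_sq_eq_mul_pow_four_iff {a b : F} (hb : b ≠ 0) :
    a * b ^ 2 = b * a ^ 4 ↔ a = 0 ∨ a = b ^ 5 := by
  have hcube : (b ^ 5) ^ 3 = b := by rw [← pow_mul]; exact Q.pr15 b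
  rw [eq_comm, show a * b ^ 2 = b * b * a by ring, mul_pow_four_eq_iff hb]
  exact or_congr_right ⟨fun h => F.pow_three_injective (h.trans hcube.symm), fun h => h ▸ hcube⟩

theorem F.mul_pow_four_eq_mul_pow_four_iff {b d : F} (hb : b ≠ 0) :
    d * b ^ 4 = b * d ^ 4 ↔ d = 0 ∨ d = b := by
  rw [eq_comm, show d * b ^ 4 = b * b ^ 3 * d by ring, mul_pow_four_eq_iff hb]
  exact or_congr_right F.pow_three_injective.eq_iff

namespace Q

def centralizerPairs (b2 b3 : F) : Set (F × F) :=
  {p | p.1 * b2 ^ 2 = b2 * p.1 ^ 4 ∧ p.1 * b3 ^ 2 + p.2 * b2 ^ 4 = b3 * p.1 + b2 * p.2 ^ 4}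

theorem mem_centralizerPairs_iff {a1 a2 b2 b3 : F} (hb2 : b2 ≠ 0) :
    (a1, a2) ∈ centralizerPairs b2 b3 ↔
      (a1 = 0 ∨ a1 = b2 ^ 5) ∧ (a2 + a1 ^ 3 * b3 ^ 2 = 0 ∨ a2 + a1 ^ 3 * b3 ^ 2 = b2) := by
  rw [centralizerPairs, Set.mem_ofPred_eq, F.mul_sq_eq_mul_pow_four_iff hb2,
    ← F.mul_pow_four_eq_mul_pow_four_iff hb2]
  refine and_congr_right fun ha1 => ?_
  rcases ha1 with rfl | rfl
  · constructor <;> intro h <;> linear_combination h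
  · have hcube : (b2 ^ 5) ^ 3 = b2 := by rw [← pow_mul]; exact Q.pr15 b2
    have hfrob : (b3 ^ 2) ^ 4 = b3 := by rw [← pow_mul]; exact Q.pr8 b3
    rw [hcube, F.add_pow4, mul_pow, hfrob]
    constructor <;> intro h <;> linear_combination h

theorem ncard_centralizerPairs {b2 b3 : F} (hb2 : b2 ≠ 0) :
    (centralizerPairs b2 b3).ncard = 4 := by
  let shear : F × F ≃ F × F := (Equiv.refl F).prodShear fun a => Equiv.addRight (a ^ 3 * b3 ^ 2)
  have hS : centralizerPairs b2 b3 = shear ⁻¹' ({0, b2 ^ 5} ×ˢ {0, b2}) := by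
    ext ⟨a1, a2⟩
    exact mem_centralizerPairs_iff hb2
  rw [hS, Set.ncard_preimage_of_injective_subset_range shear.injective (by simp), Set.ncard_prod,
    Set.ncard_pair (pow_ne_zero 5 hb2).symm, Set.ncard_pair hb2.symm]

def equivProd : Q ≃ (F × F) × F × F where
  toFun a := ((a.a1, a.a2), a.a3, a.a4)
  invFun x := ⟨x.1.1, x.1.2, x.2.1, x.2.2⟩
  left_inv _ := rfl
  right_inv _ := rfl

theorem card : Nat.card Q = 4096 := by
  rw [Nat.card_congr equivProd, Nat.card_prod, Nat.card_prod, F.card]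

theorem card_subtype_pair_mem (S : Set (F × F)) :
    Nat.card {a : Q // (a.a1, a.a2) ∈ S} = S.ncard * 64 := by
  have e : {a : Q // (a.a1, a.a2) ∈ S} ≃ S × F × F :=
    (equivProd.subtypeEquiv fun _ => Iff.rfl).trans Equiv.prodSubtypeFstEquivSubtypeProd
  rw [Nat.card_congr e, Nat.card_prod, Nat.card_prod, Nat.card_coe_set_eq, F.card]

theorem mem_centralizer_iff {a : Q} {b2 b3 b4 : F} :
    a ∈ Subgroup.centralizer {(⟨0, b2, b3, b4⟩ : Q)} ↔
      (a.a1, a.a2) ∈ centralizerPairs b2 b3 := by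
  rw [Subgroup.mem_centralizer_singleton_iff, centralizerPairs, Set.mem_ofPred_eq]
  obtain ⟨a1, a2, a3, a4⟩ := a
  simp only [mul_def, mk.injEq]
  constructor
  · rintro ⟨-, -, h3, h4⟩
    exact ⟨by linear_combination h3, by linear_combination h4⟩
  · rintro ⟨h1, h2⟩
    exact ⟨by ring, by ring, by linear_combination h1, by linear_combination h2⟩

theorem centralizer_of_Q2_element_general (b2 b3 b4 : F) (hb2 : b2 ≠ 0) :
    Nat.card (Subgroup.centralizer {(⟨0, b2, b3, b4⟩ : Q)}) = 256 ∧
      (Subgroup.centralizer {(⟨0, b2, b3, b4⟩ : Q)}).index = 16 ∧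
      Set.ncard {p : F × F |
          p.1 * b2 ^ 2 = b2 * p.1 ^ 4 ∧
            p.1 * b3 ^ 2 + p.2 * b2 ^ 4 = b3 * p.1 + b2 * p.2 ^ 4} = 4 := by
  have hS := ncard_centralizerPairs (b3 := b3) hb2
  have hC : Nat.card (Subgroup.centralizer {(⟨0, b2, b3, b4⟩ : Q)}) = 256 := by
    rw [Nat.card_congr (Equiv.subtypeEquivRight fun _ => mem_centralizer_iff),
      card_subtype_pair_mem, hS]
  refine ⟨hC, ?_, hS⟩
  have h := (Subgroup.centralizer {(⟨0, b2, b3, b4⟩ : Q)}).card_mul_index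
  rw [hC, Q.card] at h
  omega

/-- For `b = (0,b₂,b₃,b₄)` with `b₂ ≠ 0` and `Tr b₃ = 0`, the centralizer of `b` in
`Q` has exactly `256` elements, i.e. index `16` in `Q`; equivalently, exactly `4`
pairs `(a₁,a₂) ∈ F²` satisfy `a₁b₂² = b₂a₁⁴` and `a₁b₃² + a₂b₂⁴ = b₃a₁ + b₂a₂⁴`. -/
theorem centralizer_of_Q2_element (b2 b3 b4 : F) (hb2 : b2 ≠ 0) (htr : Tr b3 = 0) :
    Nat.card (Subgroup.centralizer {(⟨0, b2, b3, b4⟩ : Q)}) = 256 ∧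
      (Subgroup.centralizer {(⟨0, b2, b3, b4⟩ : Q)}).index = 16 ∧
      Set.ncard {p : F × F |
          p.1 * b2 ^ 2 = b2 * p.1 ^ 4 ∧
            p.1 * b3 ^ 2 + p.2 * b2 ^ 4 = b3 * p.1 + b2 * p.2 ^ 4} = 4 :=
  centralizer_of_Q2_element_general b2 b3 b4 hb2

end Q
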